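/- Let Σθ < 1/2 with θ_n > 0 decreasing. In the iterative 6-gon von Koch-type construction where each stage-n segment of length R_{n-1} is replaced by six equal segments of length R_n = R_{n-1}/(2 + 4 cos θ_n), every segment of every finite-stage polygonal approximant makes an angle with the x-axis of absolute value at most Σ_n θ_n; consequently each finite-stage polygonal curve is the graph of a function y = y(x) with Lipschitz constant at most tan(Σ_n θ_n), and the uniform limit curve Γ is a Lipschitz graph. -/

import Mathlib

/-!
Each of the six pieces replacing a segment is that segment rotated by `0` or `±θₙ` and scaled by
`1 / (2 + 4 cos θₙ) ≤ 1/2`. Hence a stage-`n` segment has direction angle at most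
`θ₁ + ⋯ + θₙ ≤ Σ θ < π/2` and width at most `2⁻ⁿ`, so its slope is at most `L = tan Σ θ`.
A chain of such segments is totally ordered by the cone `{v | |v.2| ≤ L v.1}`, so each stage is
the graph of an `L`-Lipschitz function `Fₙ`. Consecutive stages agree at the vertices of the
coarser one, which are `2⁻ⁿ`-dense in `[0, 1]`, so `|Fₙ₊₁ - Fₙ| ≤ 2L 2⁻ⁿ` there; the `Fₙ`
converge uniformly and the Lipschitz bound passes to the limit.
-/

open Real

/-- The six-segment polygonal replacement of the segment from `a` to `b`, with angle `θ`,
through the explicit points of the von Koch-type construction. -/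
noncomputable def repl (θ : ℝ) (a b : ℝ × ℝ) : List ((ℝ × ℝ) × (ℝ × ℝ)) :=
  let x := b.1 - a.1
  let y := b.2 - a.2
  let c := 2 + 4 * Real.cos θ
  let q0 : ℝ × ℝ := a
  let q1 : ℝ × ℝ := (a.1 + x / c, a.2 + y / c)
  let q2 : ℝ × ℝ := (a.1 + ((1 + Real.cos θ) / c) * x - (Real.sin θ / c) * y,
    a.2 + ((1 + Real.cos θ) / c) * y + (Real.sin θ / c) * x)
  let q3 : ℝ × ℝ := (a.1 + x / 2, a.2 + y / 2)
  let q4 : ℝ × ℝ := (a.1 + ((1 + 3 * Real.cos θ) / c) * x + (Real.sin θ / c) * y,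
    a.2 + ((1 + 3 * Real.cos θ) / c) * y - (Real.sin θ / c) * x)
  let q5 : ℝ × ℝ := (a.1 + ((1 + 4 * Real.cos θ) / c) * x, a.2 + ((1 + 4 * Real.cos θ) / c) * y)
  let q6 : ℝ × ℝ := b
  [(q0, q1), (q1, q2), (q2, q3), (q3, q4), (q4, q5), (q5, q6)]

/-- The stage-`n` polygonal approximant of the von Koch-type curve with angles `θ`,
starting from the horizontal unit segment. -/
noncomputable def stage (θ : ℕ → ℝ) : ℕ → List ((ℝ × ℝ) × (ℝ × ℝ))
  | 0 => [(((0 : ℝ), (0 : ℝ)), ((1 : ℝ), (0 : ℝ)))]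
  | n + 1 => (stage θ n).flatMap fun s => repl (θ (n + 1)) s.1 s.2

/-- The stage-`n` polygonal curve, as a subset of the plane. -/
noncomputable def stageSet (θ : ℕ → ℝ) (n : ℕ) : Set (ℝ × ℝ) :=
  {p | ∃ s ∈ stage θ n, p ∈ segment ℝ s.1 s.2}

open Filter Topology

theorem LipschitzOnWith.of_tendsto {α β ι : Type*} [PseudoEMetricSpace α] [PseudoEMetricSpace β]
    {l : Filter ι} [l.NeBot] {K : NNReal} {F : ι → α → β} {f : α → β} {s : Set α}
    (hF : ∀ i, LipschitzOnWith K (F i) s)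
    (hf : ∀ x ∈ s, Tendsto (fun i => F i x) l (𝓝 (f x))) : LipschitzOnWith K f s := by
  simp only [lipschitzOnWith_iff_restrict] at hF ⊢
  exact (isClosed_setOfPred_lipschitzWith K).mem_of_tendsto
    (tendsto_pi_nhds.2 fun x => hf x x.2) (Eventually.of_forall hF)

theorem exists_tendstoUniformlyOn_of_dist_le_geometric {α β : Type*} [PseudoMetricSpace β]
    [CompleteSpace β] [Nonempty β] {F : ℕ → α → β} {s : Set α} {C r : ℝ} (hr₀ : 0 ≤ r)
    (hr : r < 1)
    (hF : ∀ n, ∀ x ∈ s, dist (F n x) (F (n + 1) x) ≤ C * r ^ n) :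
    ∃ f : α → β, TendstoUniformlyOn F f atTop s := by
  have hcauchy (x) (hx : x ∈ s) : CauchySeq (F · x) :=
    cauchySeq_of_le_geometric r C hr fun n => hF n x hx
  refine ⟨fun x => limUnder atTop (F · x), Metric.tendstoUniformlyOn_iff.2 fun ε hε => ?_⟩
  have hgeom : Tendsto (fun n => C * r ^ n / (1 - r)) atTop (𝓝 0) := by
    simpa using ((tendsto_pow_atTop_nhds_zero_of_lt_one hr₀ hr).const_mul C).div_const (1 - r)
  filter_upwards [hgeom.eventually_lt_const hε] with n hn x hx
  rw [dist_comm]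
  exact (dist_le_of_le_geometric_of_tendsto r C hr (fun n => hF n x hx)
    (hcauchy x hx).tendsto_limUnder n).trans_lt hn

theorem exists_lipschitzWith_of_abs_sub_le {S : Set (ℝ × ℝ)} {K : NNReal}
    (hS : ∀ p ∈ S, ∀ q ∈ S, |p.2 - q.2| ≤ K * |p.1 - q.1|) :
    ∃ g : ℝ → ℝ, LipschitzWith K g ∧ S ⊆ {p | p.2 = g p.1} := by
  classical
  let g₀ : ℝ → ℝ := fun x => if h : ∃ y, (x, y) ∈ S then h.choose else 0
  have hg₀ : ∀ p ∈ S, (p.1, g₀ p.1) ∈ S := fun p hp => by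
    have h : ∃ y, (p.1, y) ∈ S := ⟨p.2, hp⟩
    simpa only [g₀, dif_pos h] using h.choose_spec
  have hlip : LipschitzOnWith K g₀ (Prod.fst '' S) := by
    rw [lipschitzOnWith_iff_dist_le_mul]
    rintro _ ⟨p, hp, rfl⟩ _ ⟨q, hq, rfl⟩
    simpa only [Real.dist_eq] using hS _ (hg₀ p hp) _ (hg₀ q hq)
  obtain ⟨g, hg, hg₀g⟩ := hlip.extend_real
  refine ⟨g, hg, fun p hp => ?_⟩
  have h := hS _ (hg₀ p hp) p hp
  rw [sub_self, abs_zero, mul_zero, abs_nonpos_iff, sub_eq_zero] at h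
  rw [Set.mem_ofPred_eq, ← hg₀g ⟨p, hp, rfl⟩, ← h]

theorem Real.abs_sin_le_tan_mul_cos {φ T : ℝ} (hφ : |φ| ≤ T) (hT : T < π / 2) :
    |sin φ| ≤ tan T * cos φ := by
  have hT₀ : 0 ≤ T := (abs_nonneg φ).trans hφ
  have hcos : 0 < cos T := cos_pos_of_mem_Ioo ⟨by linarith, hT⟩
  have hdiff : 0 ≤ sin (T - |φ|) :=
    sin_nonneg_of_nonneg_of_le_pi (by linarith) (by linarith [abs_nonneg φ])
  rw [abs_sin_eq_sin_abs_of_abs_le_pi (by linarith [pi_pos]), tan_eq_sin_div_cos,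
    div_mul_eq_mul_div, le_div_iff₀ hcos, ← cos_abs φ]
  rw [sin_sub] at hdiff
  linarith

def IsChainTo : ℝ × ℝ → List ((ℝ × ℝ) × (ℝ × ℝ)) → ℝ × ℝ → Prop
  | a, [], b => a = b
  | a, s :: l, b => s.1 = a ∧ IsChainTo s.2 l b

def chainSet (l : List ((ℝ × ℝ) × (ℝ × ℝ))) : Set (ℝ × ℝ) :=
  {p | ∃ s ∈ l, p ∈ segment ℝ s.1 s.2}

@[simp]
theorem mem_chainSet_cons {s : (ℝ × ℝ) × (ℝ × ℝ)} {l : List ((ℝ × ℝ) × (ℝ × ℝ))} {p : ℝ × ℝ} :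
    p ∈ chainSet (s :: l) ↔ p ∈ segment ℝ s.1 s.2 ∨ p ∈ chainSet l := by
  simp [chainSet]

theorem IsChainTo.append {a m b : ℝ × ℝ} {l₁ l₂ : List ((ℝ × ℝ) × (ℝ × ℝ))}
    (h₁ : IsChainTo a l₁ m) (h₂ : IsChainTo m l₂ b) : IsChainTo a (l₁ ++ l₂) b := by
  induction l₁ generalizing a with
  | nil => cases h₁; exact h₂
  | cons s l ih => exact ⟨h₁.1, ih h₁.2⟩

theorem IsChainTo.flatMap {a b : ℝ × ℝ} {l : List ((ℝ × ℝ) × (ℝ × ℝ))}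
    {f : (ℝ × ℝ) × (ℝ × ℝ) → List ((ℝ × ℝ) × (ℝ × ℝ))}
    (hf : ∀ s ∈ l, IsChainTo s.1 (f s) s.2) (hl : IsChainTo a l b) :
    IsChainTo a (l.flatMap f) b := by
  induction l generalizing a with
  | nil => exact hl
  | cons s l ih =>
    rw [List.flatMap_cons, ← hl.1]
    exact (hf s List.mem_cons_self).append
      (ih (fun t ht => hf t (List.mem_cons_of_mem s ht)) hl.2)

theorem IsChainTo.exists_mem_Icc {a b : ℝ × ℝ} {l : List ((ℝ × ℝ) × (ℝ × ℝ))}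
    (hl : IsChainTo a l b) (hab : a.1 < b.1) {x : ℝ} (hx : x ∈ Set.Icc a.1 b.1) :
    ∃ s ∈ l, x ∈ Set.Icc s.1.1 s.2.1 := by
  induction l generalizing a with
  | nil => cases hl; exact absurd hab (lt_irrefl _)
  | cons s l ih =>
    by_cases hxs : x ≤ s.2.1
    · exact ⟨s, List.mem_cons_self, hl.1 ▸ hx.1, hxs⟩
    · rw [not_le] at hxs
      obtain ⟨t, ht, hxt⟩ := ih hl.2 (hxs.trans_le hx.2) ⟨hxs.le, hx.2⟩
      exact ⟨t, List.mem_cons_of_mem s ht, hxt⟩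

def ConeLE (L : ℝ) (p q : ℝ × ℝ) : Prop :=
  p.1 ≤ q.1 ∧ |q.2 - p.2| ≤ L * (q.1 - p.1)

namespace ConeLE

variable {L : ℝ}

theorem trans {p q r : ℝ × ℝ} (hpq : ConeLE L p q) (hqr : ConeLE L q r) : ConeLE L p r := by
  refine ⟨hpq.1.trans hqr.1, ?_⟩
  calc |r.2 - p.2| ≤ |r.2 - q.2| + |q.2 - p.2| := abs_sub_le _ _ _
    _ ≤ L * (r.1 - q.1) + L * (q.1 - p.1) := add_le_add hqr.2 hpq.2
    _ = L * (r.1 - p.1) := by ring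

theorem abs_sub_le_of_total {p q : ℝ × ℝ} (h : ConeLE L p q ∨ ConeLE L q p) :
    |p.2 - q.2| ≤ L * |p.1 - q.1| := by
  rcases h with ⟨h₁, h₂⟩ | ⟨h₁, h₂⟩
  · rwa [abs_sub_comm, abs_sub_comm p.1, abs_of_nonneg (sub_nonneg.2 h₁)]
  · rwa [abs_of_nonneg (sub_nonneg.2 h₁)]

theorem add_smul_sub {a b : ℝ × ℝ} (hab : ConeLE L a b) {u v : ℝ} (huv : u ≤ v) :
    ConeLE L (a + u • (b - a)) (a + v • (b - a)) := by
  have hv : 0 ≤ v - u := sub_nonneg.2 huv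
  simp only [ConeLE, Prod.fst_add, Prod.snd_add, Prod.smul_fst, Prod.smul_snd, Prod.fst_sub,
    Prod.snd_sub, smul_eq_mul]
  refine ⟨by nlinarith [hab.1], ?_⟩
  calc |a.2 + v * (b.2 - a.2) - (a.2 + u * (b.2 - a.2))| = (v - u) * |b.2 - a.2| := by
        rw [← abs_of_nonneg hv, ← abs_mul]; ring_nf
    _ ≤ (v - u) * (L * (b.1 - a.1)) := mul_le_mul_of_nonneg_left hab.2 hv
    _ = L * (a.1 + v * (b.1 - a.1) - (a.1 + u * (b.1 - a.1))) := by ring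

theorem total_of_mem_segment {a b p q : ℝ × ℝ} (hab : ConeLE L a b)
    (hp : p ∈ segment ℝ a b) (hq : q ∈ segment ℝ a b) : ConeLE L p q ∨ ConeLE L q p := by
  rw [segment_eq_image'] at hp hq
  obtain ⟨u, -, rfl⟩ := hp
  obtain ⟨v, -, rfl⟩ := hq
  exact (le_total u v).imp hab.add_smul_sub hab.add_smul_sub

theorem between_of_mem_segment {a b p : ℝ × ℝ} (hab : ConeLE L a b) (hp : p ∈ segment ℝ a b) :
    ConeLE L a p ∧ ConeLE L p b := by
  rw [segment_eq_image'] at hp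
  obtain ⟨u, hu, rfl⟩ := hp
  constructor
  · simpa using hab.add_smul_sub hu.1
  · simpa using hab.add_smul_sub hu.2

end ConeLE

namespace IsChainTo

variable {L : ℝ} {a b : ℝ × ℝ} {l : List ((ℝ × ℝ) × (ℝ × ℝ))}

theorem coneLE_of_mem_chainSet (hl : IsChainTo a l b) (hL : ∀ s ∈ l, ConeLE L s.1 s.2)
    {p : ℝ × ℝ} (hp : p ∈ chainSet l) : ConeLE L a p := by
  induction l generalizing a with
  | nil => simp [chainSet] at hp
  | cons s l ih =>
    have hs := hL s List.mem_cons_self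
    rw [← hl.1]
    rcases mem_chainSet_cons.1 hp with hp | hp
    · exact (hs.between_of_mem_segment hp).1
    · exact hs.trans (ih hl.2 (fun t ht => hL t (List.mem_cons_of_mem s ht)) hp)

theorem coneLE_total (hl : IsChainTo a l b) (hL : ∀ s ∈ l, ConeLE L s.1 s.2)
    {p q : ℝ × ℝ} (hp : p ∈ chainSet l) (hq : q ∈ chainSet l) :
    ConeLE L p q ∨ ConeLE L q p := by
  induction l generalizing a with
  | nil => simp [chainSet] at hp
  | cons s l ih =>
    have hs := hL s List.mem_cons_self
    have hL' : ∀ t ∈ l, ConeLE L t.1 t.2 := fun t ht => hL t (List.mem_cons_of_mem s ht)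
    have hbefore {r r' : ℝ × ℝ} (hr : r ∈ segment ℝ s.1 s.2) (hr' : r' ∈ chainSet l) :
        ConeLE L r r' :=
      (hs.between_of_mem_segment hr).2.trans (hl.2.coneLE_of_mem_chainSet hL' hr')
    rcases mem_chainSet_cons.1 hp with hp | hp <;> rcases mem_chainSet_cons.1 hq with hq | hq
    · exact hs.total_of_mem_segment hp hq
    · exact Or.inl (hbefore hp hq)
    · exact Or.inr (hbefore hq hp)
    · exact ih hl.2 hL' hp hq

end IsChainTo

theorem repl_isChainTo (θ : ℝ) (a b : ℝ × ℝ) : IsChainTo a (repl θ a b) b := by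
  simp [repl, IsChainTo]

theorem stage_isChainTo (θ : ℕ → ℝ) (n : ℕ) : IsChainTo (0, 0) (stage θ n) (1, 0) := by
  induction n with
  | zero => exact ⟨rfl, rfl⟩
  | succ n ih => exact ih.flatMap fun s _ => repl_isChainTo _ s.1 s.2

theorem fst_mem_stageSet_succ {θ : ℕ → ℝ} {n : ℕ} {s : (ℝ × ℝ) × (ℝ × ℝ)}
    (hs : s ∈ stage θ n) : s.1 ∈ stageSet θ (n + 1) := by
  refine ⟨(repl (θ (n + 1)) s.1 s.2).head (by simp [repl]), ?_, ?_⟩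
  · exact List.mem_flatMap.2 ⟨s, hs, List.head_mem _⟩
  · simpa [repl] using left_mem_segment ℝ _ _

theorem exists_angle_of_mem_repl {θ φ R : ℝ} {a b : ℝ × ℝ} (hθ : 2 + 4 * cos θ ≠ 0)
    (hab : b - a = R • (cos φ, sin φ)) {s : (ℝ × ℝ) × (ℝ × ℝ)} (hs : s ∈ repl θ a b) :
    ∃ ψ, |ψ - φ| ≤ |θ| ∧ s.2 - s.1 = (R / (2 + 4 * cos θ)) • (cos ψ, sin ψ) := by
  obtain ⟨hx, hy⟩ : b.1 = a.1 + R * cos φ ∧ b.2 = a.2 + R * sin φ := by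
    simp only [Prod.ext_iff, Prod.fst_sub, Prod.snd_sub, Prod.smul_fst, Prod.smul_snd,
      smul_eq_mul] at hab
    constructor <;> linarith [hab.1, hab.2]
  simp only [repl, List.mem_cons, List.not_mem_nil, or_false] at hs
  -- eliminating `cos θ` in favour of the denominator `c` lets `field_simp` clear it
  have hcos : cos θ = (2 + 4 * cos θ - 2) / 4 := by ring
  generalize 2 + 4 * cos θ = c at hθ hcos hs ⊢
  rcases hs with rfl | rfl | rfl | rfl | rfl | rfl <;>
    [use φ; use φ + θ; use φ - θ; use φ - θ; use φ + θ; use φ] <;>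
    refine ⟨by simp, ?_⟩ <;>
    ext <;> simp only [Prod.fst_sub, Prod.snd_sub, Prod.smul_fst, Prod.smul_snd, smul_eq_mul,
      hx, hy, cos_add, sin_add, cos_sub, sin_sub, hcos] <;> field_simp <;> ring

noncomputable def stageLength (θ : ℕ → ℝ) : ℕ → ℝ
  | 0 => 1
  | n + 1 => stageLength θ n / (2 + 4 * cos (θ (n + 1)))

theorem exists_angle_of_mem_stage {θ : ℕ → ℝ} (hθ : ∀ n, 2 + 4 * cos (θ n) ≠ 0) {n : ℕ}
    {s : (ℝ × ℝ) × (ℝ × ℝ)} (hs : s ∈ stage θ n) :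
    ∃ φ, |φ| ≤ ∑ k ∈ Finset.range n, |θ (k + 1)| ∧
      s.2 - s.1 = stageLength θ n • (cos φ, sin φ) := by
  induction n generalizing s with
  | zero =>
    obtain rfl : s = ((0, 0), (1, 0)) := List.mem_singleton.1 hs
    exact ⟨0, by simp, by ext <;> simp [stageLength]⟩
  | succ n ih =>
    obtain ⟨t, ht, hst⟩ := List.mem_flatMap.1 hs
    obtain ⟨φ, hφ, htφ⟩ := ih ht
    obtain ⟨ψ, hψ, hsψ⟩ := exists_angle_of_mem_repl (hθ (n + 1)) htφ hst
    refine ⟨ψ, ?_, hsψ⟩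
    calc |ψ| ≤ |φ| + |ψ - φ| := by simpa using abs_add_le φ (ψ - φ)
      _ ≤ ∑ k ∈ Finset.range n, |θ (k + 1)| + |θ (n + 1)| := add_le_add hφ hψ
      _ = ∑ k ∈ Finset.range (n + 1), |θ (k + 1)| := (Finset.sum_range_succ _ n).symm

theorem stageLength_pos {θ : ℕ → ℝ} (hθ : ∀ n, 0 ≤ cos (θ n)) (n : ℕ) : 0 < stageLength θ n := by
  induction n with
  | zero => exact one_pos
  | succ n ih => exact div_pos ih (by linarith [hθ (n + 1)])

theorem stageLength_le {θ : ℕ → ℝ} (hθ : ∀ n, 0 ≤ cos (θ n)) (n : ℕ) :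
    stageLength θ n ≤ (1 / 2) ^ n := by
  induction n with
  | zero => simp [stageLength]
  | succ n ih =>
    calc stageLength θ n / (2 + 4 * cos (θ (n + 1))) ≤ stageLength θ n / 2 :=
          div_le_div_of_nonneg_left (stageLength_pos hθ n).le two_pos (by linarith [hθ (n + 1)])
      _ ≤ (1 / 2) ^ (n + 1) := by rw [pow_succ]; linarith

section Angles

variable {θ : ℕ → ℝ} (hpos : ∀ n, 0 < θ n) (hsummable : Summable θ)
  (hsum : ∑' n, θ n < π / 2)
include hpos hsummable

theorem sum_range_succ_le_tsum (n : ℕ) : ∑ k ∈ Finset.range n, θ (k + 1) ≤ ∑' k, θ k := by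
  calc ∑ k ∈ Finset.range n, θ (k + 1) ≤ ∑ k ∈ Finset.range (n + 1), θ k := by
        rw [Finset.sum_range_succ']; linarith [hpos 0]
    _ ≤ ∑' k, θ k := hsummable.sum_le_tsum _ fun k _ => (hpos k).le

include hsum

theorem cos_pos_of_tsum_lt (n : ℕ) : 0 < cos (θ n) := by
  have : θ n ≤ ∑' k, θ k := hsummable.le_tsum n fun k _ => (hpos k).le
  exact cos_pos_of_mem_Ioo ⟨by linarith [hpos n, pi_pos], by linarith⟩

theorem exists_angle_le_tsum_of_mem_stage {n : ℕ} {s : (ℝ × ℝ) × (ℝ × ℝ)} (hs : s ∈ stage θ n) :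
    ∃ φ, |φ| ≤ ∑' k, θ k ∧ s.2.1 - s.1.1 = stageLength θ n * cos φ ∧
      s.2.2 - s.1.2 = stageLength θ n * sin φ := by
  have hcos := cos_pos_of_tsum_lt hpos hsummable hsum
  obtain ⟨φ, hφ, hsφ⟩ := exists_angle_of_mem_stage (fun n => by linarith [hcos n]) hs
  simp only [abs_of_pos (hpos _)] at hφ
  exact ⟨φ, hφ.trans (sum_range_succ_le_tsum hpos hsummable n), congrArg Prod.fst hsφ,
    congrArg Prod.snd hsφ⟩

theorem stage_slope {n : ℕ} {s : (ℝ × ℝ) × (ℝ × ℝ)} (hs : s ∈ stage θ n) :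
    0 < s.2.1 - s.1.1 ∧ |s.2.2 - s.1.2| ≤ tan (∑' k, θ k) * (s.2.1 - s.1.1) := by
  obtain ⟨φ, hφ, hx, hy⟩ := exists_angle_le_tsum_of_mem_stage hpos hsummable hsum hs
  have hR := stageLength_pos (fun n => (cos_pos_of_tsum_lt hpos hsummable hsum n).le) n
  have hφcos : 0 < cos φ := by
    rw [← cos_abs]; exact cos_pos_of_mem_Ioo ⟨by linarith [abs_nonneg φ, pi_pos], by linarith⟩
  rw [hx, hy, abs_mul, abs_of_pos hR]
  refine ⟨mul_pos hR hφcos, ?_⟩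
  calc stageLength θ n * |sin φ| ≤ stageLength θ n * (tan (∑' k, θ k) * cos φ) :=
        mul_le_mul_of_nonneg_left (abs_sin_le_tan_mul_cos hφ hsum) hR.le
    _ = tan (∑' k, θ k) * (stageLength θ n * cos φ) := by ring

theorem stage_width_le {n : ℕ} {s : (ℝ × ℝ) × (ℝ × ℝ)} (hs : s ∈ stage θ n) :
    s.2.1 - s.1.1 ≤ (1 / 2) ^ n := by
  obtain ⟨φ, -, hx, -⟩ := exists_angle_le_tsum_of_mem_stage hpos hsummable hsum hs
  have hcos (k : ℕ) := (cos_pos_of_tsum_lt hpos hsummable hsum k).le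
  rw [hx]
  calc stageLength θ n * cos φ ≤ stageLength θ n :=
        mul_le_of_le_one_right (stageLength_pos hcos n).le (cos_le_one φ)
    _ ≤ (1 / 2) ^ n := stageLength_le hcos n

end Angles

section Graphs

variable {θ : ℕ → ℝ} (hpos : ∀ n, 0 < θ n) (hsummable : Summable θ)
  (hsum : ∑' n, θ n < π / 2)
include hpos hsummable hsum

theorem abs_sub_le_of_mem_stageSet (n : ℕ) {p q : ℝ × ℝ} (hp : p ∈ stageSet θ n)
    (hq : q ∈ stageSet θ n) : |p.2 - q.2| ≤ tan (∑' k, θ k) * |p.1 - q.1| := by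
  have hcone (s) (hs : s ∈ stage θ n) : ConeLE (tan (∑' k, θ k)) s.1 s.2 :=
    have hslope := stage_slope hpos hsummable hsum hs
    ⟨sub_nonneg.1 hslope.1.le, hslope.2⟩
  exact ConeLE.abs_sub_le_of_total ((stage_isChainTo θ n).coneLE_total hcone hp hq)

theorem dist_le_of_stageSet_subset_graph {n : ℕ} {K : NNReal} {g g' : ℝ → ℝ}
    (hg : LipschitzWith K g) (hg' : LipschitzWith K g')
    (hgraph : stageSet θ n ⊆ {p | p.2 = g p.1})
    (hgraph' : stageSet θ (n + 1) ⊆ {p | p.2 = g' p.1}) {x : ℝ} (hx : x ∈ Set.Icc 0 1) :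
    dist (g x) (g' x) ≤ 2 * K * (1 / 2) ^ n := by
  obtain ⟨s, hs, hxs⟩ := (stage_isChainTo θ n).exists_mem_Icc (by norm_num) hx
  have hvertex : g s.1.1 = g' s.1.1 :=
    (hgraph ⟨s, hs, left_mem_segment ℝ _ _⟩).symm.trans (hgraph' (fst_mem_stageSet_succ hs))
  have hxv : dist x s.1.1 ≤ (1 / 2) ^ n := by
    rw [dist_eq, abs_of_nonneg (sub_nonneg.2 hxs.1)]
    linarith [stage_width_le hpos hsummable hsum hs, hxs.2]
  calc dist (g x) (g' x) ≤ dist (g x) (g s.1.1) + dist (g' s.1.1) (g' x) := by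
        rw [hvertex]; exact dist_triangle _ _ _
    _ ≤ K * dist x s.1.1 + K * dist s.1.1 x := add_le_add (hg.dist_le_mul _ _) (hg'.dist_le_mul _ _)
    _ ≤ 2 * K * (1 / 2) ^ n := by rw [dist_comm s.1.1]; nlinarith [K.2]

end Graphs

theorem stmt17_general (θ : ℕ → ℝ) (hpos : ∀ n, 0 < θ n)
    (hsummable : Summable θ) (hsum : (∑' n, θ n) < 1 / 2) :
    (∀ n : ℕ, ∀ s ∈ stage θ n,
      0 < s.2.1 - s.1.1 ∧ |s.2.2 - s.1.2| ≤ Real.tan (∑' k, θ k) * (s.2.1 - s.1.1)) ∧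
    ∃ F : ℕ → ℝ → ℝ, ∃ f : ℝ → ℝ,
      (∀ n : ℕ,
        LipschitzOnWith (Real.toNNReal (Real.tan (∑' k, θ k))) (F n) (Set.Icc 0 1) ∧
        stageSet θ n ⊆ {p : ℝ × ℝ | p.2 = F n p.1}) ∧
      LipschitzOnWith (Real.toNNReal (Real.tan (∑' k, θ k))) f (Set.Icc 0 1) ∧
      TendstoUniformlyOn F f Filter.atTop (Set.Icc 0 1) := by
  have hsum' : ∑' n, θ n < π / 2 := by linarith [pi_gt_three]
  have hK : ((tan (∑' k, θ k)).toNNReal : ℝ) = tan (∑' k, θ k) := Real.coe_toNNReal _ <|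
    tan_nonneg_of_nonneg_of_le_pi_div_two (tsum_nonneg fun n => (hpos n).le) hsum'.le
  have hgraph (n : ℕ) : ∃ g : ℝ → ℝ, LipschitzWith (tan (∑' k, θ k)).toNNReal g ∧
      stageSet θ n ⊆ {p | p.2 = g p.1} :=
    exists_lipschitzWith_of_abs_sub_le fun p hp q hq => by
      rw [hK]; exact abs_sub_le_of_mem_stageSet hpos hsummable hsum' n hp hq
  choose F hFlip hFgraph using hgraph
  obtain ⟨f, hf⟩ := exists_tendstoUniformlyOn_of_dist_le_geometric (F := F) (s := Set.Icc 0 1)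
    (by norm_num) (by norm_num) fun n x hx => dist_le_of_stageSet_subset_graph hpos hsummable
      hsum' (hFlip n) (hFlip (n + 1)) (hFgraph n) (hFgraph (n + 1)) hx
  exact ⟨fun n s hs => stage_slope hpos hsummable hsum' hs, F, f,
    fun n => ⟨(hFlip n).lipschitzOnWith, hFgraph n⟩,
    .of_tendsto (fun n => (hFlip n).lipschitzOnWith) fun x hx => hf.tendsto_at hx, hf⟩

/-- In the von Koch-type construction with `θ_n` positive, decreasing, `Σ θ_n < 1/2`:
every segment of every finite-stage approximant makes an angle at most `Σ θ_n` with the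
`x`-axis (equivalently `|Δy| ≤ tan(Σθ)·Δx` with `Δx > 0`); each stage is the graph of a
`tan(Σθ)`-Lipschitz function on `[0,1]`, and these converge uniformly to a Lipschitz
graph `Γ`. -/
theorem stmt17 (θ : ℕ → ℝ) (hpos : ∀ n, 0 < θ n) (hanti : Antitone θ)
    (hsummable : Summable θ) (hsum : (∑' n, θ n) < 1 / 2) :
    (∀ n : ℕ, ∀ s ∈ stage θ n,
      0 < s.2.1 - s.1.1 ∧ |s.2.2 - s.1.2| ≤ Real.tan (∑' k, θ k) * (s.2.1 - s.1.1)) ∧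
    ∃ F : ℕ → ℝ → ℝ, ∃ f : ℝ → ℝ,
      (∀ n : ℕ,
        LipschitzOnWith (Real.toNNReal (Real.tan (∑' k, θ k))) (F n) (Set.Icc 0 1) ∧
        stageSet θ n ⊆ {p : ℝ × ℝ | p.2 = F n p.1}) ∧
      LipschitzOnWith (Real.toNNReal (Real.tan (∑' k, θ k))) f (Set.Icc 0 1) ∧
      TendstoUniformlyOn F f Filter.atTop (Set.Icc 0 1) :=
  stmt17_general θ hpos hsummable hsum
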